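/- Let σ(∇u) = μ[(∇u + (∇u)ᵗ) - (2/3)(div u)I] + η(div u)I with μ, η > 0, for u: Ω → ℝ³ a C¹ vector field on Ω ⊂ ℝ³ with u·n = 0 on ∂Ω. Then on ∂Ω, for any unit tangent vector τ: σ(∇u)n·τ = μ(ω × n)·τ - 2μ((τ·∇)n)·u, where ω = ∇ × u. -/

import Mathlib

open Matrix

/-- The viscous stress tensor `σ(A) = μ[(A + Aᵗ) - (2/3)tr(A)I] + η tr(A)I`. -/
noncomputable def stress (μ η : ℝ) (A : Matrix (Fin 3) (Fin 3) ℝ) :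
    Matrix (Fin 3) (Fin 3) ℝ :=
  μ • (A + Aᵀ - ((2 : ℝ) / 3 * A.trace) • (1 : Matrix (Fin 3) (Fin 3) ℝ))
    + (η * A.trace) • (1 : Matrix (Fin 3) (Fin 3) ℝ)

/-- at a boundary point `x` of `S = ∂Ω`, with `u·n = 0` on `S`, `τ` a
tangent vector at `x` (witnessed by a curve in `S`), `n x ⬝ τ = 0`, `A = ∇u(x)` the
Jacobian matrix and `ω = ∇ × u(x)`, the tangential stress satisfies
`σ(∇u)n·τ = μ(ω × n)·τ - 2μ((τ·∇)n)·u`. -/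
theorem stress_tangential (μ η : ℝ) (hμ : 0 < μ) (hη : 0 < η)
    (S : Set (Fin 3 → ℝ)) (u n : (Fin 3 → ℝ) → (Fin 3 → ℝ))
    (x τ : Fin 3 → ℝ)
    (hu : DifferentiableAt ℝ u x) (hn : DifferentiableAt ℝ n x)
    (hx : x ∈ S) (hun : ∀ y ∈ S, u y ⬝ᵥ n y = 0)
    (hnτ : n x ⬝ᵥ τ = 0)
    (c : ℝ → Fin 3 → ℝ) (hc0 : c 0 = x) (hcS : ∀ t : ℝ, c t ∈ S)
    (hc : HasDerivAt c τ 0)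
    (A : Matrix (Fin 3) (Fin 3) ℝ)
    (hA : ∀ i j, A i j = fderiv ℝ u x (Pi.single j 1) i) :
    ((stress μ η A).mulVec (n x)) ⬝ᵥ τ
      = μ * ((crossProduct ![A 2 1 - A 1 2, A 0 2 - A 2 0, A 1 0 - A 0 1]) (n x) ⬝ᵥ τ)
        - 2 * μ * ((fderiv ℝ n x τ) ⬝ᵥ u x) := by
  have hux : HasFDerivAt u (fderiv ℝ u x) (c 0) := hc0 ▸ hu.hasFDerivAt
  have hnx : HasFDerivAt n (fderiv ℝ n x) (c 0) := hc0 ▸ hn.hasFDerivAt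
  have hcomp : HasDerivAt (fun t => u (c t)) (fderiv ℝ u x τ) 0 :=
    hux.comp_hasDerivAt 0 hc
  have hncomp : HasDerivAt (fun t => n (c t)) (fderiv ℝ n x τ) 0 :=
    hnx.comp_hasDerivAt 0 hc
  have h1 := hasDerivAt_pi.mp hcomp
  have h2 := hasDerivAt_pi.mp hncomp
  have hsum : HasDerivAt (fun t => ∑ i, u (c t) i * n (c t) i)
      (∑ i, ((fderiv ℝ u x τ) i * n (c 0) i + u (c 0) i * (fderiv ℝ n x τ) i)) 0 :=
    HasDerivAt.fun_sum (fun i _ => (h1 i).mul (h2 i))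
  have hconst : HasDerivAt (fun t => ∑ i, u (c t) i * n (c t) i) 0 0 := by
    have heq : (fun t => ∑ i, u (c t) i * n (c t) i) = fun _ => (0 : ℝ) := by
      funext t
      have := hun (c t) (hcS t)
      simpa [dotProduct] using this
    rw [heq]
    exact hasDerivAt_const _ _
  have key : ∑ i, ((fderiv ℝ u x τ) i * n x i + u x i * (fderiv ℝ n x τ) i) = 0 := by
    have := hsum.unique hconst
    rwa [hc0] at this
  -- express fderiv u x τ via A
  have hAτ : ∀ i, (fderiv ℝ u x τ) i = ∑ j, A i j * τ j := by
    intro i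
    have hτ : τ = ∑ j : Fin 3, τ j • (Pi.single j (1 : ℝ) : Fin 3 → ℝ) := by
      funext k
      simp [Pi.single_apply, Finset.sum_apply]
    conv_lhs => rw [hτ, map_sum]
    simp only [_root_.map_smul, Finset.sum_apply, Pi.smul_apply, smul_eq_mul]
    exact Finset.sum_congr rfl fun j _ => by rw [hA i j]; ring
  have key' : ∑ i, ((∑ j, A i j * τ j) * n x i + u x i * (fderiv ℝ n x τ) i) = 0 := by
    rw [← key]
    exact Finset.sum_congr rfl (fun i _ => by rw [hAτ i])
  rw [Fin.sum_univ_three] at key'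
  rw [Fin.sum_univ_three, Fin.sum_univ_three, Fin.sum_univ_three] at key'
  have hnτ' : n x 0 * τ 0 + n x 1 * τ 1 + n x 2 * τ 2 = 0 := by
    simpa [dotProduct, Fin.sum_univ_three] using hnτ
  simp only [stress, Matrix.mulVec, dotProduct, Matrix.trace, Matrix.diag,
    crossProduct, Fin.sum_univ_three, Matrix.add_apply, Matrix.sub_apply,
    Matrix.smul_apply, Matrix.one_apply, Matrix.transpose_apply, Pi.add_apply,
    Pi.sub_apply, Pi.smul_apply, smul_eq_mul, LinearMap.mk₂_apply,
    Matrix.cons_val_zero, Matrix.cons_val_one, Matrix.head_cons,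
    Matrix.cons_val_two, Matrix.tail_cons]
  norm_num [Fin.ext_iff]
  linear_combination (2 * μ) * key' +
    ((η - 2 / 3 * μ) * (A 0 0 + A 1 1 + A 2 2)) * hnτ'
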